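/- If {Λ(t)} is a CP-divisible family of completely positive trace-nonincreasing maps (Λ(t₂) = Θ(t₂,t₁)∘Λ(t₁) with Θ(t₂,t₁) CP trace-nonincreasing for all t₂ ≥ t₁ ≥ 0), then the induced generalized erasure family Γ_Λ(t) ≔ Γ_{Λ(t)} is CP-divisible by trace-preserving maps: Γ_Λ(t₂) = Ξ(t₂,t₁)∘Γ_Λ(t₁) where Ξ(t₂,t₁) is the completely positive trace-preserving map built from Θ(t₂,t₁) as Ξ[(ρ,·;·,c)] = (Θ(t₂,t₁)[ρ], 0; 0, c + tr(ρ(I − Θ(t₂,t₁)†[I]))). -/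

import Mathlib

open Matrix
open scoped ComplexOrder

/-- The positive semidefinite square root (removed from Mathlib; restored with its old definition). -/
noncomputable def Matrix.PosSemidef.sqrt {n 𝕜 : Type*} [Fintype n] [DecidableEq n] [RCLike 𝕜]
    {A : Matrix n n 𝕜} (hA : A.PosSemidef) : Matrix n n 𝕜 :=
  (hA.1.eigenvectorUnitary : Matrix n n 𝕜) * diagonal ((↑) ∘ (Real.sqrt ∘ hA.1.eigenvalues)) *
    (star (hA.1.eigenvectorUnitary : Matrix n n 𝕜))

/-- The trace norm `‖A‖₁ = tr √(AᴴA)` of a complex square matrix. -/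
noncomputable def traceNorm {n : Type*} [Fintype n] [DecidableEq n]
    (A : Matrix n n ℂ) : ℝ :=
  ((Matrix.posSemidef_conjTranspose_mul_self A).sqrt.trace).re

/-- The blockwise extension `Id_n ⊗ Λ` of a map on matrices. -/
def blockApply {d e : Type*} (n : ℕ) (Λ : Matrix d d ℂ → Matrix e e ℂ)
    (M : Matrix (Fin n × d) (Fin n × d) ℂ) : Matrix (Fin n × e) (Fin n × e) ℂ :=
  fun p q => Λ (Matrix.of fun a b => M (p.1, a) (q.1, b)) p.2 q.2

/-- `Λ` is completely positive: `Id_n ⊗ Λ` maps positive semidefinite matrices to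
positive semidefinite matrices, for every `n`. -/
def IsCompletelyPositive {d e : Type*} [Fintype d] [Fintype e]
    (Λ : Matrix d d ℂ → Matrix e e ℂ) : Prop :=
  ∀ (n : ℕ) (M : Matrix (Fin n × d) (Fin n × d) ℂ),
    M.PosSemidef → (blockApply n Λ M).PosSemidef

/-- `Λ` is trace nonincreasing: `tr Λ[ρ] ≤ tr ρ` for every positive semidefinite `ρ`. -/
def IsTraceNonincreasing {d e : Type*} [Fintype d] [Fintype e]
    (Λ : Matrix d d ℂ → Matrix e e ℂ) : Prop :=
  ∀ ρ : Matrix d d ℂ, ρ.PosSemidef → (Λ ρ).trace.re ≤ ρ.trace.re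

/-- The generalized erasure extension `Γ_Λ[ρ] = Λ[ρ] ⊕ tr((I − Λ†[I])ρ)|e⟩⟨e|`. -/
noncomputable def erasureExt {d : Type*} [Fintype d] [DecidableEq d]
    (Λ Λd : Matrix d d ℂ → Matrix d d ℂ) (ρ : Matrix d d ℂ) :
    Matrix (d ⊕ Unit) (d ⊕ Unit) ℂ :=
  Matrix.fromBlocks (Λ ρ) 0 0
    ((((1 - Λd 1) * ρ).trace) • (1 : Matrix Unit Unit ℂ))

/-- The map `Ξ` built from `Θ`, acting on block operators over `H ⊕ ℂ`. -/
noncomputable def xiExt {d : Type*} [Fintype d] [DecidableEq d]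
    (Θ Θd : Matrix d d ℂ → Matrix d d ℂ)
    (M : Matrix (d ⊕ Unit) (d ⊕ Unit) ℂ) : Matrix (d ⊕ Unit) (d ⊕ Unit) ℂ :=
  Matrix.fromBlocks (Θ M.toBlocks₁₁) 0 0
    (M.toBlocks₂₂ + ((M.toBlocks₁₁ * (1 - Θd 1)).trace) • (1 : Matrix Unit Unit ℂ))

/-!
`Ξ` acts as `Θ` on the `H`-block and moves the trace that `Θ` loses, `tr (M₁₁ (I - Θ†[I]))`, into
the erasure flag. For `Θ` completely positive and trace nonincreasing, `I - Θ†[I] ≥ 0`, so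
`X ↦ tr (X (I - Θ†[I]))` is completely positive and `Ξ` is a direct sum of completely positive maps.
Trace preservation is the duality `tr Θ[X] = tr (X Θ†[I])`, and `Ξ ∘ Γ_{Λ(t₁)} = Γ_{Λ(t₂)}` is the
telescoping of lost traces `(tr ρ - tr Λ(t₁)[ρ]) + (tr Λ(t₁)[ρ] - tr Λ(t₂)[ρ]) = tr ρ - tr Λ(t₂)[ρ]`.
-/

namespace Matrix

theorem trace_fromBlocks {m n R : Type*} [Fintype m] [Fintype n] [AddCommMonoid R]
    (A : Matrix m m R) (B : Matrix m n R) (C : Matrix n m R) (D : Matrix n n R) :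
    (fromBlocks A B C D).trace = A.trace + D.trace := by
  simp [trace, Fintype.sum_sum_type]

theorem dotProduct_mulVec_eq_trace_vecMulVec_mul {n : Type*} [Fintype n] (A : Matrix n n ℂ)
    (x : n → ℂ) : star x ⬝ᵥ (A *ᵥ x) = (vecMulVec x (star x) * A).trace := by
  rw [vecMulVec_mul, trace_vecMulVec, dotProduct_mulVec, dotProduct_comm]

theorem PosSemidef.fromBlocks_zero {m n : Type*} [Fintype m] [Fintype n]
    {A : Matrix m m ℂ} {D : Matrix n n ℂ} (hA : A.PosSemidef) (hD : D.PosSemidef) :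
    (fromBlocks A 0 0 D).PosSemidef := by
  refine .of_dotProduct_mulVec_nonneg ?_ fun x => ?_
  · simp [IsHermitian, fromBlocks_conjTranspose, hA.1.eq, hD.1.eq]
  · rw [← Sum.elim_comp_inl_inr x, fromBlocks_mulVec]
    simp only [zero_mulVec, add_zero, zero_add, Function.star_sumElim, sumElim_dotProduct_sumElim]
    exact add_nonneg (hA.dotProduct_mulVec_nonneg _) (hD.dotProduct_mulVec_nonneg _)

end Matrix

section

variable {d : Type*} [Fintype d]

namespace IsCompletelyPositive

variable {Θ : Matrix d d ℂ → Matrix d d ℂ}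

theorem posSemidef_apply (hΘ : IsCompletelyPositive Θ) {ρ : Matrix d d ℂ} (hρ : ρ.PosSemidef) :
    (Θ ρ).PosSemidef :=
  (hΘ 1 _ (hρ.submatrix Prod.snd)).submatrix fun x => (0, x)

variable [DecidableEq d]

theorem map_conjTranspose (hΘ : IsCompletelyPositive Θ) (X : Matrix d d ℂ) :
    Θ Xᴴ = (Θ X)ᴴ := by
  let K : Matrix d (Fin 2 × d) ℂ := of fun c p => ![1, X] p.1 c p.2
  have hblock (i j : Fin 2) :
      (of fun a b => (Kᴴ * K) (i, a) (j, b)) = (![1, X] i)ᴴ * ![1, X] j := by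
    ext a b
    simp [K, mul_apply]
  have hK := (hΘ 2 _ (posSemidef_conjTranspose_mul_self K)).1
  ext y x
  simpa [blockApply, hblock] using (congr_fun₂ hK (1, y) (0, x)).symm

end IsCompletelyPositive

variable [DecidableEq d]

/-- The adjoint of `Θ` for the bilinear pairing `(X, Y) ↦ tr (X * Y)`, playing the role of `Θ†`. -/
noncomputable def traceDual (Θ : Matrix d d ℂ →ₗ[ℂ] Matrix d d ℂ) :
    Matrix d d ℂ →ₗ[ℂ] Matrix d d ℂ where
  toFun Y := of fun a b => (Θ (single b a 1) * Y).trace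
  map_add' Y Z := by ext; simp [Matrix.mul_add]
  map_smul' c Y := by ext; simp

theorem trace_map_mul_eq_trace_mul_traceDual (Θ : Matrix d d ℂ →ₗ[ℂ] Matrix d d ℂ)
    (X Y : Matrix d d ℂ) : (Θ X * Y).trace = (X * traceDual Θ Y).trace := by
  have hX : X = ∑ i, ∑ j, X i j • single i j (1 : ℂ) := by
    simpa only [smul_single, smul_eq_mul, mul_one] using matrix_eq_sum_single X
  conv_lhs => rw [hX]
  simp only [map_sum, map_smul, Finset.sum_mul, smul_mul, trace_sum, trace_smul, smul_eq_mul]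
  simp only [trace, diag, mul_apply (M := X), traceDual, LinearMap.coe_mk, AddHom.coe_mk, of_apply]

theorem trace_mul_one_sub_dual_one {Θ Θd : Matrix d d ℂ → Matrix d d ℂ}
    (hdual : ∀ X Y, (Θ X * Y).trace = (X * Θd Y).trace) (X : Matrix d d ℂ) :
    (X * (1 - Θd 1)).trace = X.trace - (Θ X).trace := by
  rw [Matrix.mul_sub, trace_sub, Matrix.mul_one, ← hdual, Matrix.mul_one]

theorem posSemidef_one_sub_dual_one {Θ Θd : Matrix d d ℂ → Matrix d d ℂ}
    (hΘ : IsCompletelyPositive Θ) (hTNI : IsTraceNonincreasing Θ)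
    (hdual : ∀ X Y, (Θ X * Y).trace = (X * Θd Y).trace) : (1 - Θd 1).PosSemidef := by
  have hentry (a b : d) : Θd 1 a b = (Θ (single b a 1)).trace := by
    rw [← Matrix.mul_one (Θ _), hdual, trace_single_mul, one_smul]
  refine .of_dotProduct_mulVec_nonneg (isHermitian_one.sub ?_) fun x => ?_
  · ext a b
    rw [conjTranspose_apply, hentry, hentry, ← trace_conjTranspose, ← hΘ.map_conjTranspose,
      conjTranspose_single, star_one]
  · set ρ := vecMulVec x (star x)
    have hρ : ρ.PosSemidef := posSemidef_vecMulVec_self_star x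
    have hρ₀ := hρ.trace_nonneg
    have hΘρ₀ := (hΘ.posSemidef_apply hρ).trace_nonneg
    rw [dotProduct_mulVec_eq_trace_vecMulVec_mul, trace_mul_one_sub_dual_one hdual,
      sub_nonneg, Complex.le_def]
    exact ⟨hTNI ρ hρ, by rw [← Complex.nonneg_iff.1 hρ₀ |>.2, ← Complex.nonneg_iff.1 hΘρ₀ |>.2]⟩

theorem isCompletelyPositive_trace_mul_smul_one {B : Matrix d d ℂ} (hB : B.PosSemidef) :
    IsCompletelyPositive fun X : Matrix d d ℂ => (X * B).trace • (1 : Matrix Unit Unit ℂ) := by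
  intro n M hM
  -- writing `B = Sᴴ S`, the matrix of block traces is a sum of congruences of `M`,
  -- one for each row of `S`
  obtain ⟨S, rfl⟩ : ∃ S : Matrix d d ℂ, B = star S * S := by
    open scoped MatrixOrder Matrix.Norms.L2Operator in
    exact CStarAlgebra.nonneg_iff_eq_star_mul_self.mp hB.nonneg
  let W (c : d) : Matrix (Fin n × d) (Fin n × Unit) ℂ :=
    of fun x q => if x.1 = q.1 then star (S c x.2) else 0
  have hsum : blockApply n (fun X => (X * (star S * S)).trace • 1) M = ∑ c, (W c)ᴴ * M * W c := by
    ext ⟨p, -⟩ ⟨q, -⟩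
    simp only [blockApply, trace, diag_apply, mul_apply, of_apply, star_apply, RCLike.star_def,
      Finset.mul_sum, Matrix.smul_apply, one_apply_eq, smul_eq_mul, mul_one, Matrix.sum_apply,
      conjTranspose_apply, apply_ite, RingHomCompTriple.comp_apply, RingHom.id_apply, star_zero,
      ite_mul, zero_mul, Fintype.sum_prod_type, Finset.sum_ite_irrel, Finset.sum_const_zero,
      Finset.sum_ite_eq', Finset.mem_univ, ↓reduceIte, Finset.sum_mul, mul_zero, W]
    rw [Finset.sum_comm_cycle]
    refine Finset.sum_congr rfl fun c _ => Finset.sum_comm.trans ?_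
    exact Finset.sum_congr rfl fun b _ => Finset.sum_congr rfl fun a _ => by ring
  rw [hsum]
  exact posSemidef_sum _ fun c _ => hM.conjTranspose_mul_mul_same _

theorem isCompletelyPositive_xiExt {Θ Θd : Matrix d d ℂ → Matrix d d ℂ}
    (hΘ : IsCompletelyPositive Θ) (hB : (1 - Θd 1).PosSemidef) :
    IsCompletelyPositive (xiExt Θ Θd) := by
  intro n M hM
  let f : Fin n × d → Fin n × (d ⊕ Unit) := fun x => (x.1, .inl x.2)
  let g : Fin n × Unit → Fin n × (d ⊕ Unit) := fun x => (x.1, .inr x.2)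
  let Ψ := fun X : Matrix d d ℂ => (X * (1 - Θd 1)).trace • (1 : Matrix Unit Unit ℂ)
  have hblocks : blockApply n (xiExt Θ Θd) M =
      (fromBlocks (blockApply n Θ (M.submatrix f f)) 0 0
        (M.submatrix g g + blockApply n Ψ (M.submatrix f f))).submatrix
        (Equiv.prodSumDistrib _ _ _) (Equiv.prodSumDistrib _ _ _) := by
    ext ⟨p, a | u⟩ ⟨q, b | v⟩ <;> simp [blockApply, xiExt, f, g, Ψ, toBlocks₁₁, toBlocks₂₂]
  rw [hblocks]
  exact ((hΘ n _ (hM.submatrix f)).fromBlocks_zero ((hM.submatrix g).add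
    (isCompletelyPositive_trace_mul_smul_one hB n _ (hM.submatrix f)))).submatrix _

theorem trace_xiExt {Θ Θd : Matrix d d ℂ → Matrix d d ℂ}
    (hdual : ∀ X Y, (Θ X * Y).trace = (X * Θd Y).trace) (M : Matrix (d ⊕ Unit) (d ⊕ Unit) ℂ) :
    (xiExt Θ Θd M).trace = M.trace := by
  conv_rhs => rw [← fromBlocks_toBlocks M, trace_fromBlocks]
  rw [xiExt, trace_fromBlocks, trace_add, trace_smul, trace_mul_one_sub_dual_one hdual]
  simp only [trace_one, Fintype.card_unit, Nat.cast_one, smul_eq_mul, mul_one]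
  ring

theorem xiExt_erasureExt {Θ Θd Λ₁ Λd₁ Λ₂ Λd₂ : Matrix d d ℂ → Matrix d d ℂ}
    (hΘ : ∀ X Y, (Θ X * Y).trace = (X * Θd Y).trace)
    (hΛ₁ : ∀ X Y, (Λ₁ X * Y).trace = (X * Λd₁ Y).trace)
    (hΛ₂ : ∀ X Y, (Λ₂ X * Y).trace = (X * Λd₂ Y).trace)
    (hcomp : ∀ ρ, Θ (Λ₁ ρ) = Λ₂ ρ) (ρ : Matrix d d ℂ) :
    xiExt Θ Θd (erasureExt Λ₁ Λd₁ ρ) = erasureExt Λ₂ Λd₂ ρ := by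
  simp only [xiExt, erasureExt, toBlocks_fromBlocks₁₁, toBlocks_fromBlocks₂₂, hcomp, ← add_smul]
  rw [trace_mul_comm _ ρ, trace_mul_comm _ ρ, trace_mul_one_sub_dual_one hΛ₁,
    trace_mul_one_sub_dual_one hΛ₂, trace_mul_one_sub_dual_one hΘ, hcomp,
    sub_add_sub_cancel]

end

theorem stmt16_general {d : Type*} [Fintype d] [DecidableEq d]
    (Λ Λd : ℝ → (Matrix d d ℂ →ₗ[ℂ] Matrix d d ℂ))
    (hdualΛ : ∀ t, 0 ≤ t → ∀ X Y : Matrix d d ℂ,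
      (Λ t X * Y).trace = (X * Λd t Y).trace)
    (hdiv : ∀ t₁ t₂ : ℝ, 0 ≤ t₁ → t₁ ≤ t₂ →
      ∃ Θ : Matrix d d ℂ →ₗ[ℂ] Matrix d d ℂ,
        IsCompletelyPositive (⇑Θ) ∧ IsTraceNonincreasing (⇑Θ) ∧ Λ t₂ = Θ ∘ₗ Λ t₁) :
    ∀ t₁ t₂ : ℝ, 0 ≤ t₁ → t₁ ≤ t₂ →
      ∃ Θ Θd : Matrix d d ℂ →ₗ[ℂ] Matrix d d ℂ,
        IsCompletelyPositive (⇑Θ) ∧ IsTraceNonincreasing (⇑Θ) ∧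
        (∀ X Y : Matrix d d ℂ, (Θ X * Y).trace = (X * Θd Y).trace) ∧
        Λ t₂ = Θ ∘ₗ Λ t₁ ∧
        IsCompletelyPositive (xiExt (⇑Θ) (⇑Θd)) ∧
        (∀ M : Matrix (d ⊕ Unit) (d ⊕ Unit) ℂ, (xiExt (⇑Θ) (⇑Θd) M).trace = M.trace) ∧
        (∀ ρ : Matrix d d ℂ,
          xiExt (⇑Θ) (⇑Θd) (erasureExt (⇑(Λ t₁)) (⇑(Λd t₁)) ρ)
            = erasureExt (⇑(Λ t₂)) (⇑(Λd t₂)) ρ) := by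
  intro t₁ t₂ ht₁ ht₁₂
  obtain ⟨Θ, hΘ, hTNI, hΛ⟩ := hdiv t₁ t₂ ht₁ ht₁₂
  have hdualΘ := trace_map_mul_eq_trace_mul_traceDual Θ
  refine ⟨Θ, traceDual Θ, hΘ, hTNI, hdualΘ, hΛ,
    isCompletelyPositive_xiExt hΘ (posSemidef_one_sub_dual_one hΘ hTNI hdualΘ),
    trace_xiExt hdualΘ,
    xiExt_erasureExt hdualΘ (hdualΛ t₁ ht₁) (hdualΛ t₂ (ht₁.trans ht₁₂)) fun ρ => ?_⟩
  rw [hΛ, LinearMap.comp_apply]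

/-- If `{Λ(t)}` is CP-divisible by CP trace-nonincreasing maps `Θ(t₂,t₁)`, then the
generalized erasure family `Γ_{Λ(t)}` is CP-divisible by the completely positive
trace-preserving maps `Ξ(t₂,t₁)` built from `Θ(t₂,t₁)`. -/
theorem stmt16 {d : Type*} [Fintype d] [DecidableEq d]
    (Λ Λd : ℝ → (Matrix d d ℂ →ₗ[ℂ] Matrix d d ℂ))
    (hCP : ∀ t, 0 ≤ t → IsCompletelyPositive (⇑(Λ t)))
    (hTNI : ∀ t, 0 ≤ t → IsTraceNonincreasing (⇑(Λ t)))
    (hdualΛ : ∀ t, 0 ≤ t → ∀ X Y : Matrix d d ℂ,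
      (Λ t X * Y).trace = (X * Λd t Y).trace)
    (hdiv : ∀ t₁ t₂ : ℝ, 0 ≤ t₁ → t₁ ≤ t₂ →
      ∃ Θ : Matrix d d ℂ →ₗ[ℂ] Matrix d d ℂ,
        IsCompletelyPositive (⇑Θ) ∧ IsTraceNonincreasing (⇑Θ) ∧ Λ t₂ = Θ ∘ₗ Λ t₁) :
    ∀ t₁ t₂ : ℝ, 0 ≤ t₁ → t₁ ≤ t₂ →
      ∃ Θ Θd : Matrix d d ℂ →ₗ[ℂ] Matrix d d ℂ,
        IsCompletelyPositive (⇑Θ) ∧ IsTraceNonincreasing (⇑Θ) ∧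
        (∀ X Y : Matrix d d ℂ, (Θ X * Y).trace = (X * Θd Y).trace) ∧
        Λ t₂ = Θ ∘ₗ Λ t₁ ∧
        IsCompletelyPositive (xiExt (⇑Θ) (⇑Θd)) ∧
        (∀ M : Matrix (d ⊕ Unit) (d ⊕ Unit) ℂ, (xiExt (⇑Θ) (⇑Θd) M).trace = M.trace) ∧
        (∀ ρ : Matrix d d ℂ,
          xiExt (⇑Θ) (⇑Θd) (erasureExt (⇑(Λ t₁)) (⇑(Λd t₁)) ρ)
            = erasureExt (⇑(Λ t₂)) (⇑(Λd t₂)) ρ) :=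
  stmt16_general Λ Λd hdualΛ hdiv
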